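/- If M is a product of matrices from {R̂(X), R̂(Y), R̂(Z)} (the 4×4 channel representations of the single-qubit π/8 rotations about X, Y, Z) of length k ≥ 1 in which no two consecutive factors are equal, then the lower-right 3×3 block of M has exactly one row with sde equal to k−1 (the row labeled by the leftmost factor's axis) and two rows with sde equal to k. -/

import Mathlib

/-!
Multiplying the lower-right block of each `R̂(t)` by `√2` gives a matrix `S_t` over `ℤ[√2]`, so the
block of a product of `k` factors is `N / √2 ^ k` with `N = S_{t₁} ⋯ S_{t_k}` integral, and an entry
`z / √2 ^ k` has sde exactly `k` iff `√2 ∤ z`. Modulo `√2`, `S_t` is the rank-one matrix `v_t v_tᵀ`,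
where `v_t` is the indicator of the two axes other than `t`, and `v_u ⬝ v_t = 1` for `u ≠ t`. Hence
a reduced word with leftmost axis `u` has `N ≡ v_u rᵀ (mod √2)` with `r ≠ 0`: the rows `a ≠ u` are
nonzero mod `√2` (sde `k`), while row `u` of `N` is `√2` times row `u` of the product of the
remaining factors, which is nonzero mod `√2` (sde `k - 1`).
-/

open Matrix

/-- Smallest denominator exponent in `ℤ[1/√2]`. -/
noncomputable def sde (v : ℝ) : ℕ :=
  sInf {k : ℕ | ∃ a b : ℤ, v = (a + b * Real.sqrt 2) / (Real.sqrt 2) ^ k}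

/-- Channel representations of the π/8 rotations about the `X`, `Y`, `Z` axes,
rows/columns indexed by `I, X, Y, Z`. Axis `0 = X`, `1 = Y`, `2 = Z`. -/
noncomputable def Rhat : Fin 3 → Matrix (Fin 4) (Fin 4) ℝ
  | 0 => !![1, 0, 0, 0;
            0, 1, 0, 0;
            0, 0, (Real.sqrt 2)⁻¹, -(Real.sqrt 2)⁻¹;
            0, 0, (Real.sqrt 2)⁻¹, (Real.sqrt 2)⁻¹]
  | 1 => !![1, 0, 0, 0;
            0, (Real.sqrt 2)⁻¹, 0, (Real.sqrt 2)⁻¹;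
            0, 0, 1, 0;
            0, -(Real.sqrt 2)⁻¹, 0, (Real.sqrt 2)⁻¹]
  | 2 => !![1, 0, 0, 0;
            0, (Real.sqrt 2)⁻¹, -(Real.sqrt 2)⁻¹, 0;
            0, (Real.sqrt 2)⁻¹, (Real.sqrt 2)⁻¹, 0;
            0, 0, 0, 1]

/-- `sde` of row `a` (labeling `X`, `Y` or `Z`) of the lower-right 3×3 block. -/
noncomputable def rowSde (M : Matrix (Fin 4) (Fin 4) ℝ) (a : Fin 3) : ℕ :=
  Finset.univ.sup fun c : Fin 3 => sde (M a.succ c.succ)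

open Zsqrtd

noncomputable abbrev realEmb : ℤ√2 →+* ℝ := Zsqrtd.toReal zero_le_two

-- Reduction modulo the prime `√2`, onto `ℤ[√2] / (√2) ≅ 𝔽₂`.
def modSqrt2 : ℤ√2 →+* ZMod 2 := Zsqrtd.lift ⟨0, by decide⟩

def scaledBlock : Fin 3 → Matrix (Fin 3) (Fin 3) (ℤ√2)
  | 0 => !![sqrtd, 0, 0; 0, 1, -1; 0, 1, 1]
  | 1 => !![1, 0, 1; 0, sqrtd, 0; -1, 0, 1]
  | 2 => !![1, -1, 0; 1, 1, 0; 0, 0, sqrtd]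

def offAxis (u : Fin 3) : Fin 3 → ZMod 2 := fun a => if a = u then 0 else 1

lemma realEmb_injective : Function.Injective realEmb :=
  Zsqrtd.toReal_injective _ fun n h => Int.sq_ne_two_mod_four n (h ▸ rfl)

lemma realEmb_apply (z : ℤ√2) : realEmb z = z.re + z.im * √2 := by
  simp

lemma modSqrt2_sqrtd : modSqrt2 sqrtd = 0 := by
  simp [modSqrt2]

lemma scaledBlock_map_modSqrt2 (u : Fin 3) :
    (scaledBlock u).map modSqrt2 = vecMulVec (offAxis u) (offAxis u) := by
  ext a c
  fin_cases u <;> fin_cases a <;> fin_cases c <;>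
    simp [scaledBlock, offAxis, vecMulVec_apply, modSqrt2_sqrtd]

lemma offAxis_dotProduct_offAxis {u t : Fin 3} (h : u ≠ t) : offAxis u ⬝ᵥ offAxis t = 1 := by
  fin_cases u <;> fin_cases t <;> simp_all [dotProduct, Fin.sum_univ_three, offAxis]

lemma offAxis_ne_zero (u : Fin 3) : offAxis u ≠ 0 := by
  fin_cases u <;> decide

lemma scaledBlock_mul_apply_self (u : Fin 3) (N : Matrix (Fin 3) (Fin 3) (ℤ√2)) (c : Fin 3) :
    (scaledBlock u * N) u c = sqrtd * N u c := by
  fin_cases u <;> simp [scaledBlock, mul_apply, Fin.sum_univ_three]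

lemma prod_scaledBlock_map_modSqrt2 (u : Fin 3) (l : List (Fin 3))
    (hl : (u :: l).IsChain (· ≠ ·)) :
    ∃ r ≠ 0, ((u :: l).map scaledBlock).prod.map modSqrt2 = vecMulVec (offAxis u) r := by
  induction l generalizing u with
  | nil => exact ⟨offAxis u, offAxis_ne_zero u, by simp [scaledBlock_map_modSqrt2]⟩
  | cons t l ih =>
    rw [List.isChain_cons_cons] at hl
    obtain ⟨r, hr, hN⟩ := ih t hl.2
    refine ⟨r, hr, ?_⟩
    rw [List.map_cons, List.prod_cons, Matrix.map_mul, hN, scaledBlock_map_modSqrt2,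
      vecMulVec_mul_vecMulVec, offAxis_dotProduct_offAxis hl.1, one_smul]

lemma prod_scaledBlock_map_modSqrt2_row_ne_zero (u : Fin 3) (l : List (Fin 3))
    (hl : (u :: l).IsChain (· ≠ ·)) :
    (fun c => modSqrt2 ((l.map scaledBlock).prod u c)) ≠ 0 := by
  cases l with
  | nil =>
    intro h
    simpa using congrFun h u
  | cons t l =>
    rw [List.isChain_cons_cons] at hl
    obtain ⟨r, hr, hN⟩ := prod_scaledBlock_map_modSqrt2 t l hl.2
    have hrow := fun c => congrFun (congrFun hN u) c
    simp only [map_apply, vecMulVec_apply, offAxis, if_neg hl.1, one_mul] at hrow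
    exact funext hrow ▸ hr

lemma sde_realEmb_div_pow_le (z : ℤ√2) (k : ℕ) : sde (realEmb z / √2 ^ k) ≤ k :=
  Nat.sInf_le ⟨z.re, z.im, by rw [realEmb_apply]⟩

lemma sde_realEmb_div_pow_of_modSqrt2_ne_zero {z : ℤ√2} (hz : modSqrt2 z ≠ 0) (k : ℕ) :
    sde (realEmb z / √2 ^ k) = k := by
  refine le_antisymm (sde_realEmb_div_pow_le z k) <| le_csInf ⟨k, z.re, z.im, by
    rw [realEmb_apply]⟩ ?_
  rintro m ⟨a, b, hm⟩
  by_contra! hmk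
  -- a denominator `√2 ^ m` with `m < k` would make `z` a multiple of `√2`
  have hsplit : √2 ^ k = √2 ^ m * √2 ^ (k - m) := by
    rw [← pow_add, Nat.add_sub_cancel' hmk.le]
  have hz' : z = ⟨a, b⟩ * sqrtd ^ (k - m) := by
    apply realEmb_injective
    rw [div_eq_iff (by positivity), hsplit] at hm
    rw [map_mul, map_pow, hm]
    simp only [realEmb_apply, re_sqrtd, im_sqrtd, Int.cast_zero, Int.cast_one, one_mul, zero_add]
    field_simp
  apply hz
  rw [hz', map_mul, map_pow, modSqrt2_sqrtd, zero_pow (Nat.sub_pos_of_lt hmk).ne', mul_zero]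

lemma sup_sde_realEmb_div_pow {ι : Type*} [Fintype ι] (f : ι → ℤ√2)
    (hf : (fun c => modSqrt2 (f c)) ≠ 0) (k : ℕ) :
    Finset.univ.sup (fun c => sde (realEmb (f c) / √2 ^ k)) = k := by
  obtain ⟨c, hc⟩ := Function.ne_iff.mp hf
  refine le_antisymm (Finset.sup_le fun c _ => sde_realEmb_div_pow_le (f c) k) ?_
  exact Finset.le_sup_of_le (Finset.mem_univ c)
    (sde_realEmb_div_pow_of_modSqrt2_ne_zero hc k).ge

lemma submatrix_succ_mul {R : Type*} [NonUnitalNonAssocSemiring R] {n : ℕ}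
    (M N : Matrix (Fin (n + 1)) (Fin (n + 1)) R) (hM : ∀ a : Fin n, M a.succ 0 = 0) :
    (M * N).submatrix Fin.succ Fin.succ =
      M.submatrix Fin.succ Fin.succ * N.submatrix Fin.succ Fin.succ := by
  ext a c
  simp [mul_apply, Fin.sum_univ_succ, hM]

lemma Rhat_succ_zero (t a : Fin 3) : Rhat t a.succ 0 = 0 := by
  fin_cases t <;> fin_cases a <;> rfl

lemma scaledBlock_map_realEmb (t : Fin 3) :
    (scaledBlock t).map realEmb = √2 • (Rhat t).submatrix Fin.succ Fin.succ := by
  ext a c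
  fin_cases t <;> fin_cases a <;> fin_cases c <;> simp [scaledBlock, Rhat]

lemma prod_scaledBlock_map_realEmb (l : List (Fin 3)) :
    (l.map scaledBlock).prod.map realEmb =
      √2 ^ l.length • (l.map Rhat).prod.submatrix Fin.succ Fin.succ := by
  induction l with
  | nil => ext a c; simp [one_apply]
  | cons t l ih =>
    rw [List.map_cons, List.map_cons, List.prod_cons, List.prod_cons, Matrix.map_mul, ih,
      scaledBlock_map_realEmb, submatrix_succ_mul _ _ (Rhat_succ_zero t), smul_mul_smul_comm,
      List.length_cons, pow_succ']

lemma prod_Rhat_succ_succ (l : List (Fin 3)) (a c : Fin 3) :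
    (l.map Rhat).prod a.succ c.succ =
      realEmb ((l.map scaledBlock).prod a c) / √2 ^ l.length := by
  rw [eq_div_iff (by positivity), ← map_apply (f := realEmb), prod_scaledBlock_map_realEmb]
  simp [mul_comm]

lemma rowSde_prod_Rhat (l : List (Fin 3)) (a : Fin 3) :
    rowSde (l.map Rhat).prod a =
      Finset.univ.sup fun c => sde (realEmb ((l.map scaledBlock).prod a c) / √2 ^ l.length) := by
  simp only [rowSde, prod_Rhat_succ_succ]

lemma rowSde_prod_Rhat_of_isChain (u : Fin 3) (l : List (Fin 3))
    (hl : (u :: l).IsChain (· ≠ ·)) :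
    rowSde ((u :: l).map Rhat).prod u = l.length ∧
      ∀ a ≠ u, rowSde ((u :: l).map Rhat).prod a = l.length + 1 := by
  refine ⟨?_, fun a ha => ?_⟩
  · have hrow (c : Fin 3) : realEmb (((u :: l).map scaledBlock).prod u c) / √2 ^ (l.length + 1) =
        realEmb ((l.map scaledBlock).prod u c) / √2 ^ l.length := by
      rw [List.map_cons, List.prod_cons, scaledBlock_mul_apply_self, map_mul, pow_succ']
      simp [mul_div_mul_left]
    rw [rowSde_prod_Rhat, List.length_cons]
    simp only [hrow]
    exact sup_sde_realEmb_div_pow _ (prod_scaledBlock_map_modSqrt2_row_ne_zero u l hl) _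
  · obtain ⟨r, hr, hN⟩ := prod_scaledBlock_map_modSqrt2 u l hl
    have hrow : (fun c => modSqrt2 (((u :: l).map scaledBlock).prod a c)) = r := by
      ext c
      simpa [offAxis, ha, vecMulVec_apply] using congrFun (congrFun hN a) c
    rw [rowSde_prod_Rhat, List.length_cons]
    exact sup_sde_realEmb_div_pow _ (hrow ▸ hr) _

theorem rowSde_of_reduced_product (k : ℕ) (hk : 0 < k) (P : Fin k → Fin 3)
    (hcons : ∀ (i : ℕ) (h : i + 1 < k), P ⟨i, Nat.lt_of_succ_lt h⟩ ≠ P ⟨i + 1, h⟩) :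
    rowSde ((List.ofFn fun i : Fin k => Rhat (P i)).prod) (P ⟨0, hk⟩) = k - 1 ∧
    ∀ a : Fin 3, a ≠ P ⟨0, hk⟩ →
      rowSde ((List.ofFn fun i : Fin k => Rhat (P i)).prod) a = k := by
  obtain ⟨n, rfl⟩ : ∃ n, k = n + 1 := ⟨k - 1, by omega⟩
  have hP : List.ofFn P = P ⟨0, hk⟩ :: List.ofFn (fun i : Fin n => P i.succ) := List.ofFn_succ
  have hchain : (List.ofFn P).IsChain (· ≠ ·) := List.isChain_ofFn.mpr hcons
  rw [hP] at hchain
  have hprod : (List.ofFn fun i : Fin (n + 1) => Rhat (P i)) = (List.ofFn P).map Rhat :=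
    (List.map_ofFn (f := P) (g := Rhat)).symm
  rw [hprod, hP]
  simpa using rowSde_prod_Rhat_of_isChain _ _ hchain
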